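/- arXiv:2410.18602 — 2 statements merged into one kernel-verified Lean document; each statement's English description precedes it below -/
import Mathlib

section
/- For every report profile θ' in the k-item diffusion auction setting, the probability (over the uniformly random order) that PDA terminates with no items sold is at least 1/(k+1): μ(θ') ≥ 1/(k+1). -/
namespace DA

open scoped Classical

/-- A report profile for selling `k` homogeneous items: each agent reports a
valuation over quantities `0, …, k` and a set of neighbors. -/
structure Profile (V : Type*) (k : ℕ) where
  val : V → ℕ → ℝ
  nbr : V → Set V

/-- A valuation is valid if it is normalized (`v 0 = 0`) and has
non-increasing marginals on `{0, …, k}`. -/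
def ValidVal (k : ℕ) (v : ℕ → ℝ) : Prop :=
  v 0 = 0 ∧ ∀ q : ℕ, q + 2 ≤ k → v (q + 2) - v (q + 1) ≤ v (q + 1) - v q

variable {V : Type*}

/-- A profile is valid (w.r.t. seller `s`) if every buyer's valuation is valid. -/
def Profile.Valid {k : ℕ} (θ : Profile V k) (s : V) : Prop :=
  ∀ i : V, i ≠ s → ValidVal k (θ.val i)

/-- The reported (undirected) adjacency: `{i, j}` is an edge whenever
`j ∈ r'_i` (or symmetrically `i ∈ r'_j`). -/
def Profile.adj {k : ℕ} (θ : Profile V k) (i j : V) : Prop :=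
  j ∈ θ.nbr i ∨ i ∈ θ.nbr j

/-- The feasible set `F(θ', B)` of a coalition `B`: the buyers in `B` that are
connected to the seller `s` by a path of reported edges lying inside `B`
(empty if `s ∉ B`). -/
def Profile.feasible {k : ℕ} (θ : Profile V k) (s : V) (B : Set V) : Set V :=
  {i | i ≠ s ∧ i ∈ B ∧ s ∈ B ∧
    Relation.ReflTransGen (fun a b => θ.adj a b ∧ a ∈ B ∧ b ∈ B) s i}

/-- Updating agent `i`'s report in a profile. -/
def updateAgent [DecidableEq V] {k : ℕ} (θ : Profile V k) (i : V)
    (v : ℕ → ℝ) (r : Set V) : Profile V k :=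
  ⟨Function.update θ.val i v, Function.update θ.nbr i r⟩

/-- The profile `θ'_B` obtained by removing (setting to nil) the reports of
all agents outside the coalition `B`. -/
noncomputable def Profile.restrict {k : ℕ} (θ : Profile V k) (B : Set V) : Profile V k :=
  ⟨fun i q => if i ∈ B then θ.val i q else 0,
   fun i => if i ∈ B then θ.nbr i ∩ B else ∅⟩

section Homogeneous

variable [Fintype V] [DecidableEq V]

/-- Social welfare of an allocation `π` under reports `θ`. -/
def SW {k : ℕ} (θ : Profile V k) (s : V) (π : V → ℕ) : ℝ :=
  ∑ i ∈ Finset.univ.erase s, θ.val i (π i)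

/-- The allocations admissible for a coalition `B` with irrevocable prior
allocation `πhat`: at most `k` items in total are allocated (none to the
seller), only buyers in `F(θ, B)` receive items, and nobody receives fewer
items than in `πhat`. -/
def feasAllocs {k : ℕ} (θ : Profile V k) (s : V) (B : Set V) (πhat : V → ℕ) :
    Set (V → ℕ) :=
  {π | π s = 0 ∧ (∑ i ∈ Finset.univ.erase s, π i) ≤ k ∧
    (∀ i, i ∉ θ.feasible s B → π i = 0) ∧ ∀ j, j ≠ s → πhat j ≤ π j}

/-- `SW*(θ, B, πhat)`: the maximum social welfare over the admissible
allocations for coalition `B` with prior allocation `πhat`. -/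
noncomputable def SWstar {k : ℕ} (θ : Profile V k) (s : V) (B : Set V)
    (πhat : V → ℕ) : ℝ :=
  sSup (SW θ s '' feasAllocs θ s B πhat)

/-- A chosen allocation attaining `SW*(θ, B, πhat)`. -/
noncomputable def bestAlloc {k : ℕ} (θ : Profile V k) (s : V) (B : Set V)
    (πhat : V → ℕ) : V → ℕ :=
  Classical.epsilon fun π =>
    π ∈ feasAllocs θ s B πhat ∧ SW θ s π = SWstar θ s B πhat

/-- `o_{≺i}`: the set of agents strictly preceding `i` in the order `o`. -/
def pred (o : V ≃ Fin (Fintype.card V)) (i : V) : Set V := {j | o j < o i}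

/-- `o_{≼i} = o_{≺i} ∪ {i}`. -/
def predeq (o : V ≃ Fin (Fintype.card V)) (i : V) : Set V := {j | o j ≤ o i}

/-- The partial allocation produced by PDA after the first `t` agents of the
order `o` have been traversed: the seller is skipped, and each traversed buyer
`i` receives her share in a chosen allocation attaining
`SW*(θ, o_{≼i}, π^{o≺i})`, earlier allocations being irrevocable. -/
noncomputable def pdaStep {k : ℕ} (θ : Profile V k) (s : V)
    (o : V ≃ Fin (Fintype.card V)) : ℕ → V → ℕ
  | 0 => fun _ => 0
  | t + 1 =>
    if h : t < Fintype.card V then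
      let i := o.symm ⟨t, h⟩
      if i = s then pdaStep θ s o t
      else Function.update (pdaStep θ s o t) i
        (bestAlloc θ s (predeq o i) (pdaStep θ s o t) i)
    else pdaStep θ s o t

/-- `π^{o≺i}`: the allocation fixed by PDA right before agent `i` is traversed. -/
noncomputable def pdaPrior {k : ℕ} (θ : Profile V k) (s : V)
    (o : V ≃ Fin (Fintype.card V)) (i : V) : V → ℕ :=
  pdaStep θ s o (o i : ℕ)

/-- The final allocation `π^o` produced by PDA under the order `o`. -/
noncomputable def pdaAlloc {k : ℕ} (θ : Profile V k) (s : V)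
    (o : V ≃ Fin (Fintype.card V)) : V → ℕ :=
  pdaStep θ s o (Fintype.card V)

/-- The payment charged by PDA to agent `i` under the order `o`:
`p_i = SW*(θ, o_{≺i}, π^{o≺i}) − SW*(θ, o_{≼i}, π^{o≺i}) + v'_i(π_i)`, except
that agents traversed after all `k` items have been allocated pay `0`
(and the seller pays nothing). -/
noncomputable def pdaPay {k : ℕ} (θ : Profile V k) (s : V)
    (o : V ≃ Fin (Fintype.card V)) (i : V) : ℝ :=
  if i = s then 0
  else if (∑ j ∈ Finset.univ.erase s, pdaPrior θ s o i j) = k then 0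
  else SWstar θ s (pred o i) (pdaPrior θ s o i)
    - SWstar θ s (predeq o i) (pdaPrior θ s o i)
    + θ.val i (pdaAlloc θ s o i)

/-- `u_i^o`: the utility of buyer `i` with true valuation `v` under order `o`. -/
noncomputable def pdaUtil {k : ℕ} (v : ℕ → ℝ) (θ : Profile V k) (s : V)
    (o : V ≃ Fin (Fintype.card V)) (i : V) : ℝ :=
  v (pdaAlloc θ s o i) - pdaPay θ s o i

/-- `E_PDA(u_i)`: buyer `i`'s expected utility over the uniformly random order. -/
noncomputable def pdaExpUtil {k : ℕ} (v : ℕ → ℝ) (θ : Profile V k) (s : V)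
    (i : V) : ℝ :=
  (∑ o : V ≃ Fin (Fintype.card V), pdaUtil v θ s o i) /
    ((Fintype.card V).factorial : ℝ)

/-- `μ(θ)`: the fraction of orders for which PDA terminates with no item sold. -/
noncomputable def mu {k : ℕ} (θ : Profile V k) (s : V) : ℝ :=
  (Nat.card {o : V ≃ Fin (Fintype.card V) // ∀ j, pdaAlloc θ s o j = 0} : ℝ) /
    ((Fintype.card V).factorial : ℝ)

/-- The Shapley contribution `φ_i(θ)` of agent `i`. -/
noncomputable def shapley {k : ℕ} (θ : Profile V k) (s : V) (i : V) : ℝ :=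
  ∑ B ∈ (Finset.univ.erase i).powerset,
    ((B.card.factorial * (Fintype.card V - B.card - 1).factorial : ℝ) /
      ((Fintype.card V).factorial : ℝ)) *
    (SWstar θ s (↑(insert i B)) 0 - SWstar θ s (↑B) 0)

end Homogeneous

end DA


/-!
While nothing has been sold the prior allocation is zero, so PDA sells nothing under an order
as soon as no agent `i` is a winner of the optimal from-scratch allocation of its prefix `o_{≼i}`.
Count such orders of a coalition `U` by their last agent, which may be any member of `U` except
the at most `k` winners of `U`. If it is the seller, the remaining agents have no path to the
seller and all their orders qualify; for the other choices induction gives a fraction of at least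
`1/(k+1)`. With at least `|U| - k` admissible last agents, one of them the seller, the fraction
for `U` is at least `(1 + (|U| - k - 1)/(k+1))/|U| = 1/(k+1)`.
-/

section AvoidingEnumerations

open Finset
open scoped Nat

variable {α : Type*}

def AvoidsSelection {m : ℕ} (S : Set α → Finset α) (f : Fin m → α) : Prop :=
  ∀ t, f t ∉ S (f '' Set.Iic t)

variable {S : Set α → Finset α}

theorem avoidsSelection_snoc {m : ℕ} {g : Fin m → α} {x : α} (hg : AvoidsSelection S g)
    (hx : x ∉ S (insert x (Set.range g))) :
    AvoidsSelection S (Fin.snoc g x : Fin (m + 1) → α) := by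
  intro t
  induction t using Fin.lastCases with
  | last =>
    have hIic : Set.Iic (Fin.last m) = Set.univ := Set.eq_univ_of_forall Fin.le_last
    simpa [hIic, Set.image_univ] using hx
  | cast t =>
    rw [← Fin.image_castSucc_Iic, Set.image_image]
    simpa using hg t

variable [Fintype α] [DecidableEq α]

open Classical in
noncomputable def avoidingEnumerations (S : Set α → Finset α) (m : ℕ) (U : Finset α) :
    Finset (Fin m → α) :=
  {f | Function.Injective f ∧ Set.range f = U ∧ AvoidsSelection S f}

theorem snoc_mem_avoidingEnumerations {m : ℕ} {U : Finset α} {x : α} {g : Fin m → α}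
    (hxU : x ∈ U) (hxS : x ∉ S U) (hg : g ∈ avoidingEnumerations S m (U.erase x)) :
    (Fin.snoc g x : Fin (m + 1) → α) ∈ avoidingEnumerations S (m + 1) U := by
  simp only [avoidingEnumerations, mem_filter, mem_univ, true_and] at hg ⊢
  obtain ⟨hinj, hrange, havoid⟩ := hg
  have hrange' : insert x (Set.range g) = U := by
    rw [hrange, coe_erase, Set.insert_sdiff_singleton, Set.insert_eq_of_mem (mem_coe.2 hxU)]
  refine ⟨Fin.snoc_injective_of_injective hinj (by simp [hrange]), ?_, ?_⟩
  · rw [Fin.range_snoc, hrange']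
  · exact avoidsSelection_snoc havoid (hrange' ▸ hxS)

theorem sum_card_avoidingEnumerations_erase_le (m : ℕ) (U : Finset α) :
    ∑ x ∈ U \ S U, #(avoidingEnumerations S m (U.erase x))
      ≤ #(avoidingEnumerations S (m + 1) U) := by
  rw [← card_sigma]
  refine card_le_card_of_injOn (fun p => Fin.snoc p.2 p.1) ?_ ?_
  · rintro ⟨x, g⟩ hp
    obtain ⟨hx, hg⟩ := mem_sigma.1 hp
    exact snoc_mem_avoidingEnumerations (mem_sdiff.1 hx).1 (mem_sdiff.1 hx).2 hg
  · rintro ⟨x, g⟩ - ⟨y, h⟩ - hxy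
    obtain ⟨rfl, rfl⟩ := Fin.snoc_injective2 hxy
    rfl

variable {s : α}

theorem factorial_le_card_avoidingEnumerations (hS : ∀ B, s ∉ B → S B = ∅) :
    ∀ {m : ℕ} {U : Finset α}, #U = m → s ∉ U → m ! ≤ #(avoidingEnumerations S m U)
  | 0, U, hU, _ => by
    rw [card_eq_zero.1 hU, Nat.factorial_zero, Nat.one_le_iff_ne_zero, ← pos_iff_ne_zero,
      card_pos]
    exact ⟨default, by simp [avoidingEnumerations, AvoidsSelection,
      Function.injective_of_subsingleton, Set.range_eq_empty]⟩
  | m + 1, U, hU, hs => by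
    calc (m + 1)! = ∑ _x ∈ U, m ! := by rw [sum_const, hU, smul_eq_mul, Nat.factorial_succ]
      _ ≤ ∑ x ∈ U, #(avoidingEnumerations S m (U.erase x)) := by
        refine sum_le_sum fun x hx => factorial_le_card_avoidingEnumerations hS ?_ ?_
        · rw [card_erase_of_mem hx, hU, Nat.add_sub_cancel]
        · exact fun h => hs (mem_of_mem_erase h)
      _ ≤ #(avoidingEnumerations S (m + 1) U) := by
        simpa [hS U (mod_cast hs)] using sum_card_avoidingEnumerations_erase_le (S := S) m U

theorem factorial_le_mul_card_avoidingEnumerations {k : ℕ} (hs : ∀ B, s ∉ S B)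
    (hk : ∀ B, #(S B) ≤ k) (hS : ∀ B, s ∉ B → S B = ∅) :
    ∀ {m : ℕ} {U : Finset α}, #U = m → m ! ≤ (k + 1) * #(avoidingEnumerations S m U)
  | 0, U, hU =>
    (factorial_le_card_avoidingEnumerations hS hU (by simp [card_eq_zero.1 hU])).trans
      (Nat.le_mul_of_pos_left _ k.succ_pos)
  | m + 1, U, hU => by
    obtain hsU | hsU := em' (s ∈ U)
    · exact (factorial_le_card_avoidingEnumerations hS hU hsU).trans
        (Nat.le_mul_of_pos_left _ k.succ_pos)
    have hcard : m + 1 ≤ k + #(U \ S U) := by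
      have := card_le_card_sdiff_add_card (s := U) (t := S U)
      have := hk U
      omega
    set D := U \ S U
    have hsD : s ∈ D := mem_sdiff.2 ⟨hsU, hs U⟩
    have hrest : ∀ x ∈ D.erase s, m ! ≤ (k + 1) * #(avoidingEnumerations S m (U.erase x)) :=
      fun x hx => factorial_le_mul_card_avoidingEnumerations hs hk hS
        (by rw [card_erase_of_mem (mem_sdiff.1 (mem_of_mem_erase hx)).1, hU, Nat.add_sub_cancel])
    have hseller : m ! ≤ #(avoidingEnumerations S m (U.erase s)) :=
      factorial_le_card_avoidingEnumerations hS (by rw [card_erase_of_mem hsU, hU,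
        Nat.add_sub_cancel]) (notMem_erase s U)
    calc (m + 1)! ≤ (#D - 1) * m ! + (k + 1) * m ! := by
          have := card_pos.2 ⟨s, hsD⟩
          rw [Nat.factorial_succ, ← Nat.add_mul]
          exact Nat.mul_le_mul_right _ (by omega)
      _ = ∑ _x ∈ D.erase s, m ! + (k + 1) * m ! := by
          rw [sum_const, card_erase_of_mem hsD, smul_eq_mul]
      _ ≤ ∑ x ∈ D.erase s, (k + 1) * #(avoidingEnumerations S m (U.erase x))
          + (k + 1) * #(avoidingEnumerations S m (U.erase s)) :=
          add_le_add (sum_le_sum hrest) (Nat.mul_le_mul_left _ hseller)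
      _ = (k + 1) * ∑ x ∈ D, #(avoidingEnumerations S m (U.erase x)) := by
          rw [← sum_erase_add D _ hsD, mul_add, mul_sum]
      _ ≤ (k + 1) * #(avoidingEnumerations S (m + 1) U) := by
          gcongr
          exact sum_card_avoidingEnumerations_erase_le m U

end AvoidingEnumerations

namespace DA

open Finset

variable {V : Type*} [Fintype V]

theorem predeq_ofBijective_symm {f : Fin (Fintype.card V) → V} (hf : f.Bijective)
    (t : Fin (Fintype.card V)) : predeq (Equiv.ofBijective f hf).symm (f t) = f '' Set.Iic t := by
  ext j
  obtain ⟨u, rfl⟩ := hf.2 j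
  simp [predeq, hf.1.mem_set_image]

variable [DecidableEq V] {k : ℕ} (θ : Profile V k) (s : V)

theorem feasAllocs_finite (B : Set V) (πhat : V → ℕ) : (feasAllocs θ s B πhat).Finite := by
  refine (Set.finite_Iic (fun _ : V => k)).subset fun π hπ i => ?_
  rcases eq_or_ne i s with rfl | hi
  · simp [hπ.1]
  · exact (single_le_sum (fun _ _ => Nat.zero_le _) (mem_erase.2 ⟨hi, mem_univ i⟩)).trans
      hπ.2.1

theorem bestAlloc_mem_feasAllocs {B : Set V} {πhat : V → ℕ}
    (h : (feasAllocs θ s B πhat).Nonempty) :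
    bestAlloc θ s B πhat ∈ feasAllocs θ s B πhat := by
  obtain ⟨π, hπ, hSW⟩ :=
    (h.image (SW θ s)).csSup_mem ((feasAllocs_finite θ s B πhat).image (SW θ s))
  exact (Classical.epsilon_spec (p := fun π => π ∈ feasAllocs θ s B πhat ∧
    SW θ s π = SWstar θ s B πhat) ⟨π, hπ, hSW⟩).1

theorem zero_mem_feasAllocs (B : Set V) : (0 : V → ℕ) ∈ feasAllocs θ s B 0 :=
  ⟨rfl, by simp, fun _ _ => rfl, fun _ _ => le_rfl⟩

noncomputable def winners (B : Set V) : Finset V := {i | bestAlloc θ s B 0 i ≠ 0}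

theorem bestAlloc_zero_mem_feasAllocs (B : Set V) : bestAlloc θ s B 0 ∈ feasAllocs θ s B 0 :=
  bestAlloc_mem_feasAllocs θ s ⟨0, zero_mem_feasAllocs θ s B⟩

theorem seller_notMem_winners (B : Set V) : s ∉ winners θ s B := by
  simp [winners, (bestAlloc_zero_mem_feasAllocs θ s B).1]

theorem card_winners_le (B : Set V) : #(winners θ s B) ≤ k := by
  have hsub : winners θ s B ⊆ univ.erase s := fun i hi =>
    mem_erase.2 ⟨fun h => seller_notMem_winners θ s B (h ▸ hi), mem_univ i⟩
  calc #(winners θ s B) = ∑ _i ∈ winners θ s B, 1 := card_eq_sum_ones _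
    _ ≤ ∑ i ∈ winners θ s B, bestAlloc θ s B 0 i :=
      sum_le_sum fun i hi => Nat.one_le_iff_ne_zero.2 (mem_filter.1 hi).2
    _ ≤ ∑ i ∈ univ.erase s, bestAlloc θ s B 0 i := sum_le_sum_of_subset hsub
    _ ≤ k := (bestAlloc_zero_mem_feasAllocs θ s B).2.1

theorem winners_eq_empty_of_notMem {B : Set V} (hs : s ∉ B) : winners θ s B = ∅ :=
  eq_empty_of_forall_notMem fun i hi => (mem_filter.1 hi).2 <|
    (bestAlloc_zero_mem_feasAllocs θ s B).2.2.1 i fun hi => hs hi.2.2.1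

theorem pdaAlloc_eq_zero_of_notMem_winners (o : V ≃ Fin (Fintype.card V))
    (h : ∀ i, i ∉ winners θ s (predeq o i)) : ∀ j, pdaAlloc θ s o j = 0 := by
  suffices ∀ t, pdaStep θ s o t = 0 from fun j => congr_fun (this _) j
  intro t
  induction t with
  | zero => rfl
  | succ t ih =>
    dsimp only [pdaStep]
    split_ifs with ht hs
    · exact ih
    · rw [ih, Function.update_eq_self_iff]
      simpa [winners] using h (o.symm ⟨t, ht⟩)
    · exact ih

theorem card_avoidingEnumerations_winners_le :
    #(avoidingEnumerations (winners θ s) (Fintype.card V) univ)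
      ≤ #{o : V ≃ Fin (Fintype.card V) | ∀ j, pdaAlloc θ s o j = 0} := by
  refine (card_le_card fun f hf => mem_image.2 ?_).trans
    (card_image_le (f := fun o : V ≃ Fin (Fintype.card V) => (o.symm : Fin _ → V)))
  simp only [avoidingEnumerations, mem_filter, mem_univ, true_and, coe_univ,
    Set.range_eq_univ] at hf
  obtain ⟨hinj, hsurj, havoid⟩ := hf
  have hbij : f.Bijective := ⟨hinj, hsurj⟩
  refine ⟨(Equiv.ofBijective f hbij).symm, mem_filter.2 ⟨mem_univ _, ?_⟩, rfl⟩
  refine pdaAlloc_eq_zero_of_notMem_winners θ s _ fun i => ?_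
  obtain ⟨t, rfl⟩ := hsurj i
  rw [predeq_ofBijective_symm hbij]
  exact havoid t

open scoped Nat in
theorem factorial_le_mul_card_unsold :
    (Fintype.card V)! ≤
      (k + 1) * #{o : V ≃ Fin (Fintype.card V) | ∀ j, pdaAlloc θ s o j = 0} :=
  (factorial_le_mul_card_avoidingEnumerations (seller_notMem_winners θ s) (card_winners_le θ s)
    (fun _ => winners_eq_empty_of_notMem θ s) card_univ).trans
  (Nat.mul_le_mul_left _ (card_avoidingEnumerations_winners_le θ s))

end DA

theorem pda_unsold_ratio_general {V : Type*} [Fintype V] [DecidableEq V]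
    {k : ℕ} (θ : DA.Profile V k) (s : V) :
    (1 : ℝ) / (k + 1) ≤ DA.mu θ s := by
  rw [DA.mu, Nat.card_eq_fintype_card, Fintype.card_subtype,
    div_le_div_iff₀ (by positivity) (by positivity), one_mul, mul_comm]
  exact_mod_cast DA.factorial_le_mul_card_unsold θ s

/-- For every report profile θ' in the k-item diffusion auction
setting, the probability (over the uniformly random order) that PDA terminates
with no items sold is at least 1/(k+1). -/
theorem pda_unsold_ratio {V : Type*} [Fintype V] [DecidableEq V]
    {k : ℕ} (hk : 1 ≤ k) (θ : DA.Profile V k) (s : V) (hθ : θ.Valid s) :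
    (1 : ℝ) / (k + 1) ≤ DA.mu θ s :=
  pda_unsold_ratio_general θ s
end

section
/- CPDA is incentive compatible: in the combinatorial diffusion auction setting, for every buyer i with true type θ_i, every report θ'_i with r'_i ⊆ r_i, every report profile θ'_{-i} of the others, and every order o ∈ O(V), u_i^o(θ_i, (θ_i, θ'_{-i})) ≥ u_i^o(θ_i, (θ'_i, θ'_{-i})). -/
namespace DA

open scoped Classical

/-- A report profile for the combinatorial setting with item set
`K = {1, …, k}`: each agent reports a valuation over bundles (subsets of the
items) and a set of neighbors. -/
structure CProfile (V : Type*) (k : ℕ) where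
  val : V → Finset (Fin k) → ℝ
  nbr : V → Set V

/-- A combinatorial valuation is valid if it is normalized: `v ∅ = 0`. -/
def CValidVal (k : ℕ) (v : Finset (Fin k) → ℝ) : Prop := v ∅ = 0

variable {V : Type*}

/-- A combinatorial profile is valid if every buyer's valuation is valid. -/
def CProfile.Valid {k : ℕ} (θ : CProfile V k) (s : V) : Prop :=
  ∀ i : V, i ≠ s → CValidVal k (θ.val i)

/-- The reported (undirected) adjacency. -/
def CProfile.adj {k : ℕ} (θ : CProfile V k) (i j : V) : Prop :=
  j ∈ θ.nbr i ∨ i ∈ θ.nbr j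

/-- The feasible set `F(θ', B)` of a coalition `B`. -/
def CProfile.feasible {k : ℕ} (θ : CProfile V k) (s : V) (B : Set V) : Set V :=
  {i | i ≠ s ∧ i ∈ B ∧ s ∈ B ∧
    Relation.ReflTransGen (fun a b => θ.adj a b ∧ a ∈ B ∧ b ∈ B) s i}

/-- Updating agent `i`'s report in a combinatorial profile. -/
def CupdateAgent [DecidableEq V] {k : ℕ} (θ : CProfile V k) (i : V)
    (v : Finset (Fin k) → ℝ) (r : Set V) : CProfile V k :=
  ⟨Function.update θ.val i v, Function.update θ.nbr i r⟩

/-- The combinatorial profile `θ'_B` obtained by removing the reports of all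
agents outside the coalition `B`. -/
noncomputable def CProfile.restrict {k : ℕ} (θ : CProfile V k) (B : Set V) :
    CProfile V k :=
  ⟨fun i q => if i ∈ B then θ.val i q else 0,
   fun i => if i ∈ B then θ.nbr i ∩ B else ∅⟩

section Combinatorial

variable [Fintype V] [DecidableEq V]

/-- Social welfare of a combinatorial allocation `π`. -/
def CSW {k : ℕ} (θ : CProfile V k) (s : V) (π : V → Finset (Fin k)) : ℝ :=
  ∑ i ∈ Finset.univ.erase s, θ.val i (π i)

/-- The combinatorial allocations admissible for a coalition `B` with
irrevocable prior allocation `πhat`: each item goes to at most one buyer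
(none to the seller), only buyers in `F(θ, B)` receive items, and every
buyer keeps at least the bundle given in `πhat`. -/
def CfeasAllocs {k : ℕ} (θ : CProfile V k) (s : V) (B : Set V)
    (πhat : V → Finset (Fin k)) : Set (V → Finset (Fin k)) :=
  {π | π s = ∅ ∧ (∀ i j, i ≠ j → Disjoint (π i) (π j)) ∧
    (∀ i, i ∉ θ.feasible s B → π i = ∅) ∧ ∀ j, j ≠ s → πhat j ⊆ π j}

/-- `SW*(θ, B, πhat)` in the combinatorial setting. -/
noncomputable def CSWstar {k : ℕ} (θ : CProfile V k) (s : V) (B : Set V)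
    (πhat : V → Finset (Fin k)) : ℝ :=
  sSup (CSW θ s '' CfeasAllocs θ s B πhat)

/-- A chosen combinatorial allocation attaining `SW*(θ, B, πhat)`. -/
noncomputable def CbestAlloc {k : ℕ} (θ : CProfile V k) (s : V) (B : Set V)
    (πhat : V → Finset (Fin k)) : V → Finset (Fin k) :=
  Classical.epsilon fun π =>
    π ∈ CfeasAllocs θ s B πhat ∧ CSW θ s π = CSWstar θ s B πhat

/-- The partial allocation produced by CPDA after the first `t` agents of the
order `o` have been traversed. -/
noncomputable def cpdaStep {k : ℕ} (θ : CProfile V k) (s : V)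
    (o : V ≃ Fin (Fintype.card V)) : ℕ → V → Finset (Fin k)
  | 0 => fun _ => ∅
  | t + 1 =>
    if h : t < Fintype.card V then
      let i := o.symm ⟨t, h⟩
      if i = s then cpdaStep θ s o t
      else Function.update (cpdaStep θ s o t) i
        (CbestAlloc θ s (predeq o i) (cpdaStep θ s o t) i)
    else cpdaStep θ s o t

/-- `π^{o≺i}` in CPDA. -/
noncomputable def cpdaPrior {k : ℕ} (θ : CProfile V k) (s : V)
    (o : V ≃ Fin (Fintype.card V)) (i : V) : V → Finset (Fin k) :=
  cpdaStep θ s o (o i : ℕ)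

/-- The final allocation produced by CPDA under the order `o`. -/
noncomputable def cpdaAlloc {k : ℕ} (θ : CProfile V k) (s : V)
    (o : V ≃ Fin (Fintype.card V)) : V → Finset (Fin k) :=
  cpdaStep θ s o (Fintype.card V)

/-- The payment charged by CPDA to agent `i` under the order `o`; agents
traversed after all items have been allocated pay `0`. -/
noncomputable def cpdaPay {k : ℕ} (θ : CProfile V k) (s : V)
    (o : V ≃ Fin (Fintype.card V)) (i : V) : ℝ :=
  if i = s then 0
  else if Finset.univ.biUnion (cpdaPrior θ s o i) = (Finset.univ : Finset (Fin k)) then 0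
  else CSWstar θ s (pred o i) (cpdaPrior θ s o i)
    - CSWstar θ s (predeq o i) (cpdaPrior θ s o i)
    + θ.val i (cpdaAlloc θ s o i)

/-- `u_i^o` in CPDA, with true valuation `v`. -/
noncomputable def cpdaUtil {k : ℕ} (v : Finset (Fin k) → ℝ) (θ : CProfile V k)
    (s : V) (o : V ≃ Fin (Fintype.card V)) (i : V) : ℝ :=
  v (cpdaAlloc θ s o i) - cpdaPay θ s o i

/-- `E_CPDA(u_i)`: expected utility over the uniformly random order. -/
noncomputable def cpdaExpUtil {k : ℕ} (v : Finset (Fin k) → ℝ)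
    (θ : CProfile V k) (s : V) (i : V) : ℝ :=
  (∑ o : V ≃ Fin (Fintype.card V), cpdaUtil v θ s o i) /
    ((Fintype.card V).factorial : ℝ)

/-- `μ(θ)` for CPDA: the fraction of orders for which no item is sold. -/
noncomputable def cmu {k : ℕ} (θ : CProfile V k) (s : V) : ℝ :=
  (Nat.card {o : V ≃ Fin (Fintype.card V) // ∀ j, cpdaAlloc θ s o j = ∅} : ℝ) /
    ((Fintype.card V).factorial : ℝ)

/-- The Shapley contribution `φ_i(θ)` of agent `i` in the combinatorial setting. -/
noncomputable def cshapley {k : ℕ} (θ : CProfile V k) (s : V) (i : V) : ℝ :=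
  ∑ B ∈ (Finset.univ.erase i).powerset,
    ((B.card.factorial * (Fintype.card V - B.card - 1).factorial : ℝ) /
      ((Fintype.card V).factorial : ℝ)) *
    (CSWstar θ s (↑(insert i B)) (fun _ => ∅) - CSWstar θ s (↑B) (fun _ => ∅))

end Combinatorial

end DA

/-!
The argument is that of VCG. The allocation `π^{o≺i}` fixed before buyer `i` is reached, and
`SW*(θ', o_{≺i}, π^{o≺i})`, are computed from coalitions that do not contain `i`, so they do not
depend on her report. If no items remain, she receives nothing and pays nothing whatever she
reports. Otherwise her utility under a report is her true value for her bundle plus the reported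
welfare of the others in the allocation chosen for `o_{≼i}`, minus that report-independent term.
This is the true welfare of an allocation which, since hiding neighbours only shrinks feasible
sets, is also admissible under the truthful report; and truthful reporting attains the maximum of
the true welfare.
-/

namespace DA

open Function

variable {V : Type*} {k : ℕ}

section Feasibility

variable {θ θ₁ θ₂ : CProfile V k} {s : V} {B B' : Set V}

lemma CProfile.feasible_subset : θ.feasible s B ⊆ B := fun _ hx => hx.2.1

lemma CProfile.feasible_mono (h : B ⊆ B') : θ.feasible s B ⊆ θ.feasible s B' :=
  fun x ⟨hx, hxB, hsB, hpath⟩ =>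
    ⟨hx, h hxB, h hsB,
      Relation.ReflTransGen.mono (fun _ _ hab => ⟨hab.1, h hab.2.1, h hab.2.2⟩) s x hpath⟩

lemma CProfile.feasible_mono_nbr (h : ∀ j, θ₂.nbr j ⊆ θ₁.nbr j) :
    θ₂.feasible s B ⊆ θ₁.feasible s B :=
  fun x ⟨hx, hxB, hsB, hpath⟩ =>
    ⟨hx, hxB, hsB, Relation.ReflTransGen.mono (fun a b hab =>
      ⟨hab.1.imp (fun hb => h a hb) (fun ha => h b ha), hab.2⟩) s x hpath⟩

lemma CProfile.feasible_congr (h : ∀ j ∈ B, θ₁.nbr j = θ₂.nbr j) :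
    θ₁.feasible s B = θ₂.feasible s B := by
  have hrel : (fun a b => θ₁.adj a b ∧ a ∈ B ∧ b ∈ B)
      = (fun a b => θ₂.adj a b ∧ a ∈ B ∧ b ∈ B) := by
    ext a b
    constructor <;> rintro ⟨hab, ha, hb⟩ <;>
      exact ⟨by simpa only [CProfile.adj, h a ha, h b hb] using hab, ha, hb⟩
  simp only [CProfile.feasible, hrel]

lemma CfeasAllocs_mono (h : B ⊆ B') (π₀ : V → Finset (Fin k)) :
    CfeasAllocs θ s B π₀ ⊆ CfeasAllocs θ s B' π₀ :=
  fun _ ⟨hs, hdisj, hfeas, hsub⟩ =>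
    ⟨hs, hdisj, fun j hj => hfeas j fun hm => hj (CProfile.feasible_mono h hm), hsub⟩

lemma CfeasAllocs_mono_nbr (h : ∀ j, θ₂.nbr j ⊆ θ₁.nbr j) (π₀ : V → Finset (Fin k)) :
    CfeasAllocs θ₂ s B π₀ ⊆ CfeasAllocs θ₁ s B π₀ :=
  fun _ ⟨hs, hdisj, hfeas, hsub⟩ =>
    ⟨hs, hdisj, fun j hj => hfeas j fun hm => hj (CProfile.feasible_mono_nbr h hm), hsub⟩

lemma CfeasAllocs_congr (h : ∀ j ∈ B, θ₁.nbr j = θ₂.nbr j) (π₀ : V → Finset (Fin k)) :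
    CfeasAllocs θ₁ s B π₀ = CfeasAllocs θ₂ s B π₀ := by
  simp only [CfeasAllocs, CProfile.feasible_congr h]

lemma apply_eq_empty_of_mem_CfeasAllocs {π₀ π : V → Finset (Fin k)}
    (hπ : π ∈ CfeasAllocs θ s B π₀) {j : V} (hj : j ∉ B) : π j = ∅ :=
  hπ.2.2.1 j fun hm => hj (CProfile.feasible_subset hm)

lemma self_mem_CfeasAllocs_of_le {π₀ π σ : V → Finset (Fin k)}
    (hπ : π ∈ CfeasAllocs θ s B π₀) (hσ : σ ≤ π) : σ ∈ CfeasAllocs θ s B σ := by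
  obtain ⟨hs, hdisj, hfeas, -⟩ := hπ
  exact ⟨Finset.subset_empty.mp (hs ▸ hσ s), fun a b hab => (hdisj a b hab).mono (hσ a) (hσ b),
    fun j hj => Finset.subset_empty.mp (hfeas j hj ▸ hσ j), fun _ _ => subset_rfl⟩

lemma eq_empty_of_le_of_biUnion_eq_univ [Fintype V] {σ π : V → Finset (Fin k)}
    (hdisj : Pairwise (Disjoint on π)) (hle : σ ≤ π) {i : V} (hσi : σ i = ∅)
    (hfull : Finset.univ.biUnion σ = Finset.univ) : π i = ∅ := by
  refine Finset.eq_empty_of_forall_notMem fun x hx => ?_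
  obtain ⟨j, -, hxj⟩ := Finset.mem_biUnion.mp (hfull ▸ Finset.mem_univ x)
  have hji : j ≠ i := by
    rintro rfl
    simp [hσi] at hxj
  exact Finset.disjoint_left.mp (hdisj hji) (hle j hxj) hx

end Feasibility

section UpdateAgent

variable [DecidableEq V] (θ : CProfile V k) {i : V} (v v' : Finset (Fin k) → ℝ) (r r' : Set V)

lemma CupdateAgent_nbr_congr {B : Set V} (hB : i ∉ B) :
    ∀ j ∈ B, (CupdateAgent θ i v r).nbr j = (CupdateAgent θ i v' r').nbr j :=
  fun _ hj => (update_of_ne (ne_of_mem_of_not_mem hj hB) _ _).trans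
    (update_of_ne (ne_of_mem_of_not_mem hj hB) _ _).symm

lemma CupdateAgent_val_congr {B : Set V} (hB : i ∉ B) :
    ∀ j ∈ B, (CupdateAgent θ i v r).val j = (CupdateAgent θ i v' r').val j :=
  fun _ hj => (update_of_ne (ne_of_mem_of_not_mem hj hB) _ _).trans
    (update_of_ne (ne_of_mem_of_not_mem hj hB) _ _).symm

lemma CupdateAgent_val_empty_congr (h : v ∅ = v' ∅) :
    ∀ j, (CupdateAgent θ i v r).val j ∅ = (CupdateAgent θ i v' r').val j ∅ := by
  intro j
  by_cases hj : j = i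
  · simpa only [CupdateAgent, hj, update_self] using h
  · simp only [CupdateAgent, update_of_ne hj]

lemma CupdateAgent_nbr_mono (hr : r' ⊆ r) :
    ∀ j, (CupdateAgent θ i v' r').nbr j ⊆ (CupdateAgent θ i v r).nbr j := by
  intro j
  by_cases hj : j = i
  · simpa only [CupdateAgent, hj, update_self] using hr
  · simp only [CupdateAgent, update_of_ne hj, subset_rfl]

end UpdateAgent

section Welfare

variable [Fintype V] [DecidableEq V] {θ θ₁ θ₂ : CProfile V k} {s : V} {B : Set V}
  {π₀ : V → Finset (Fin k)}

lemma le_CSWstar {π : V → Finset (Fin k)} (hπ : π ∈ CfeasAllocs θ s B π₀) :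
    CSW θ s π ≤ CSWstar θ s B π₀ :=
  le_csSup ((Set.toFinite _).image _).bddAbove ⟨π, hπ, rfl⟩

lemma CbestAlloc_spec (h : (CfeasAllocs θ s B π₀).Nonempty) :
    CbestAlloc θ s B π₀ ∈ CfeasAllocs θ s B π₀ ∧
      CSW θ s (CbestAlloc θ s B π₀) = CSWstar θ s B π₀ := by
  obtain ⟨π, hπ, hmax⟩ := (h.image (CSW θ s)).csSup_mem ((Set.toFinite _).image _)
  exact Classical.epsilon_spec
    (p := fun π => π ∈ CfeasAllocs θ s B π₀ ∧ CSW θ s π = CSWstar θ s B π₀) ⟨π, hπ, hmax⟩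

lemma le_CbestAlloc (h : π₀ ∈ CfeasAllocs θ s B π₀) : π₀ ≤ CbestAlloc θ s B π₀ := by
  intro j
  by_cases hjs : j = s
  · rw [hjs, h.1]
    exact Finset.empty_subset _
  · exact (CbestAlloc_spec ⟨π₀, h⟩).1.2.2.2 j hjs

-- `CSW` also counts the buyers outside `B`, at the empty bundle.
lemma CSW_congr_of_mem_CfeasAllocs {π : V → Finset (Fin k)}
    (hval : ∀ j ∈ B, θ₁.val j = θ₂.val j) (hempty : ∀ j, θ₁.val j ∅ = θ₂.val j ∅)
    (hπ : π ∈ CfeasAllocs θ₁ s B π₀) : CSW θ₁ s π = CSW θ₂ s π := by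
  refine Finset.sum_congr rfl fun j _ => ?_
  by_cases hj : j ∈ B
  · rw [hval j hj]
  · rw [apply_eq_empty_of_mem_CfeasAllocs hπ hj, hempty]

section Congr

variable (hnbr : ∀ j ∈ B, θ₁.nbr j = θ₂.nbr j) (hval : ∀ j ∈ B, θ₁.val j = θ₂.val j)
  (hempty : ∀ j, θ₁.val j ∅ = θ₂.val j ∅)
include hnbr hval hempty

lemma CSWstar_congr : CSWstar θ₁ s B π₀ = CSWstar θ₂ s B π₀ := by
  rw [CSWstar, CSWstar, ← CfeasAllocs_congr hnbr]
  congr 1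
  exact Set.image_congr fun _ hπ => CSW_congr_of_mem_CfeasAllocs hval hempty hπ

lemma CbestAlloc_congr : CbestAlloc θ₁ s B π₀ = CbestAlloc θ₂ s B π₀ := by
  rw [CbestAlloc, CbestAlloc, ← CfeasAllocs_congr hnbr, CSWstar_congr hnbr hval hempty]
  congr 1
  ext π
  exact and_congr_right fun hπ => by rw [CSW_congr_of_mem_CfeasAllocs hval hempty hπ]

end Congr

lemma CSW_CupdateAgent {i : V} (hi : i ≠ s) (v : Finset (Fin k) → ℝ) (r : Set V)
    (π : V → Finset (Fin k)) :
    CSW (CupdateAgent θ i v r) s π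
      = v (π i) + ∑ j ∈ (Finset.univ.erase s).erase i, θ.val j (π j) := by
  rw [CSW, ← Finset.add_sum_erase _ _ (Finset.mem_erase.mpr ⟨hi, Finset.mem_univ i⟩)]
  simp only [CupdateAgent, update_self]
  congr 1
  exact Finset.sum_congr rfl fun j hj => by rw [update_of_ne (Finset.ne_of_mem_erase hj)]

lemma sub_add_CSW_le_CSWstar_CupdateAgent {i : V} (hi : i ≠ s) (v : Finset (Fin k) → ℝ)
    {v' : Finset (Fin k) → ℝ} {r r' : Set V} (hr : r' ⊆ r) {π : V → Finset (Fin k)}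
    (hπ : π ∈ CfeasAllocs (CupdateAgent θ i v' r') s B π₀) :
    v (π i) - v' (π i) + CSW (CupdateAgent θ i v' r') s π
      ≤ CSWstar (CupdateAgent θ i v r) s B π₀ := by
  have hle := le_CSWstar (CfeasAllocs_mono_nbr (CupdateAgent_nbr_mono θ v v' r r' hr) π₀ hπ)
  rw [CSW_CupdateAgent hi] at hle ⊢
  linarith

end Welfare

section Run

variable [Fintype V] [DecidableEq V] (θ : CProfile V k) (s : V) (o : V ≃ Fin (Fintype.card V))

omit [DecidableEq V] in
lemma pred_subset_predeq (i : V) : pred o i ⊆ predeq o i :=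
  fun _ h => le_of_lt (show o _ < o i from h)

omit [DecidableEq V] in
lemma predeq_subset_pred {i j : V} (h : o j < o i) : predeq o j ⊆ pred o i :=
  fun _ ha => lt_of_le_of_lt (show o _ ≤ o j from ha) h

lemma cpdaStep_mem_CfeasAllocs (t : ℕ) {i : V} (hti : t ≤ o i) :
    cpdaStep θ s o t ∈ CfeasAllocs θ s (pred o i) (cpdaStep θ s o t) := by
  induction t generalizing i with
  | zero => exact ⟨rfl, fun _ _ _ => disjoint_bot_left, fun _ _ => rfl, fun _ _ => subset_rfl⟩
  | succ t ih =>
    rw [cpdaStep]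
    dsimp only
    split_ifs with ht hs
    · exact ih (by omega)
    · set j := o.symm ⟨t, ht⟩
      have hoj : (o j : ℕ) = t := by simp [j]
      have hprior := CfeasAllocs_mono (pred_subset_predeq o j) _ (ih hoj.ge)
      refine CfeasAllocs_mono (predeq_subset_pred o (by omega)) _
        (self_mem_CfeasAllocs_of_le (CbestAlloc_spec ⟨_, hprior⟩).1 ?_)
      exact update_le_iff.mpr ⟨le_rfl, fun a _ => le_CbestAlloc hprior a⟩
    · exact ih (by omega)

lemma cpdaPrior_mem_CfeasAllocs (i : V) :
    cpdaPrior θ s o i ∈ CfeasAllocs θ s (pred o i) (cpdaPrior θ s o i) :=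
  cpdaStep_mem_CfeasAllocs θ s o _ le_rfl

lemma cpdaPrior_mem_CfeasAllocs_predeq (i : V) :
    cpdaPrior θ s o i ∈ CfeasAllocs θ s (predeq o i) (cpdaPrior θ s o i) :=
  CfeasAllocs_mono (pred_subset_predeq o i) _ (cpdaPrior_mem_CfeasAllocs θ s o i)

lemma cpdaStep_succ_apply_of_ne {t : ℕ} {j : V} (hj : (o j : ℕ) ≠ t) :
    cpdaStep θ s o (t + 1) j = cpdaStep θ s o t j := by
  rw [cpdaStep]
  dsimp only
  split_ifs with ht
  · rfl
  · exact update_of_ne (fun h => hj (by simp [h])) _ _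
  · rfl

lemma cpdaStep_succ_self {j : V} (hj : j ≠ s) :
    cpdaStep θ s o (o j + 1) j = CbestAlloc θ s (predeq o j) (cpdaPrior θ s o j) j := by
  simp [cpdaStep, hj, cpdaPrior]

lemma cpdaAlloc_eq_CbestAlloc {j : V} (hj : j ≠ s) :
    cpdaAlloc θ s o j = CbestAlloc θ s (predeq o j) (cpdaPrior θ s o j) j := by
  suffices ∀ t, (o j : ℕ) < t → cpdaStep θ s o t j = cpdaStep θ s o (o j + 1) j by
    rw [cpdaAlloc, this _ (o j).isLt, cpdaStep_succ_self θ s o hj]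
  intro t ht
  induction t, ht using Nat.le_induction with
  | base => rfl
  | succ t ht ih => rw [cpdaStep_succ_apply_of_ne θ s o (by omega), ih]

lemma cpdaAlloc_eq_empty_of_full {i : V} (hi : i ≠ s)
    (hfull : Finset.univ.biUnion (cpdaPrior θ s o i) = Finset.univ) :
    cpdaAlloc θ s o i = ∅ := by
  have hprior := cpdaPrior_mem_CfeasAllocs_predeq θ s o i
  rw [cpdaAlloc_eq_CbestAlloc θ s o hi]
  exact eq_empty_of_le_of_biUnion_eq_univ (CbestAlloc_spec ⟨_, hprior⟩).1.2.1
    (le_CbestAlloc hprior)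
    (apply_eq_empty_of_mem_CfeasAllocs (cpdaPrior_mem_CfeasAllocs θ s o i) (lt_irrefl (o i)))
    hfull

lemma cpdaUtil_of_full (v : Finset (Fin k) → ℝ) {i : V} (hi : i ≠ s)
    (hfull : Finset.univ.biUnion (cpdaPrior θ s o i) = Finset.univ) :
    cpdaUtil v θ s o i = v ∅ := by
  rw [cpdaUtil, cpdaPay, if_neg hi, if_pos hfull, cpdaAlloc_eq_empty_of_full θ s o hi hfull,
    sub_zero]

lemma cpdaUtil_of_not_full (v : Finset (Fin k) → ℝ) {i : V} (hi : i ≠ s)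
    (hfull : Finset.univ.biUnion (cpdaPrior θ s o i) ≠ Finset.univ) :
    cpdaUtil v θ s o i =
      v (CbestAlloc θ s (predeq o i) (cpdaPrior θ s o i) i)
        - θ.val i (CbestAlloc θ s (predeq o i) (cpdaPrior θ s o i) i)
        + CSWstar θ s (predeq o i) (cpdaPrior θ s o i)
        - CSWstar θ s (pred o i) (cpdaPrior θ s o i) := by
  rw [cpdaUtil, cpdaPay, if_neg hi, if_neg hfull, cpdaAlloc_eq_CbestAlloc θ s o hi]
  ring

lemma cpdaPrior_congr {θ₁ θ₂ : CProfile V k} {i : V}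
    (hnbr : ∀ j ∈ pred o i, θ₁.nbr j = θ₂.nbr j) (hval : ∀ j ∈ pred o i, θ₁.val j = θ₂.val j)
    (hempty : ∀ j, θ₁.val j ∅ = θ₂.val j ∅) :
    cpdaPrior θ₁ s o i = cpdaPrior θ₂ s o i := by
  suffices ∀ t ≤ (o i : ℕ), cpdaStep θ₁ s o t = cpdaStep θ₂ s o t from this _ le_rfl
  intro t hti
  induction t with
  | zero => rfl
  | succ t ih =>
    rw [cpdaStep, cpdaStep, ih (by omega)]
    dsimp only
    split_ifs with ht
    · rfl
    · have hsub := predeq_subset_pred o (i := i) (j := o.symm ⟨t, ht⟩)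
        (by simp only [Equiv.apply_symm_apply, Fin.lt_def]; omega)
      rw [CbestAlloc_congr (fun j hj => hnbr j (hsub hj)) (fun j hj => hval j (hsub hj)) hempty]
    · rfl

end Run

end DA

open DA Function

theorem cpda_IC_general {V : Type*} [Fintype V] [DecidableEq V]
    {k : ℕ} (θ : DA.CProfile V k) (s : V)
    (i : V) (hi : i ≠ s)
    (v v' : Finset (Fin k) → ℝ) (r r' : Set V) (hr : r' ⊆ r)
    (hv : DA.CValidVal k v) (hv' : DA.CValidVal k v')
    (o : V ≃ Fin (Fintype.card V)) :
    DA.cpdaUtil v (DA.CupdateAgent θ i v r) s o i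
      ≥ DA.cpdaUtil v (DA.CupdateAgent θ i v' r') s o i := by
  have hpred : i ∉ pred o i := lt_irrefl (o i)
  have hnbr := CupdateAgent_nbr_congr θ v v' r r' hpred
  have hval := CupdateAgent_val_congr θ v v' r r' hpred
  have hempty := CupdateAgent_val_empty_congr θ (i := i) v v' r r' (hv.trans hv'.symm)
  have hprior := cpdaPrior_congr s o hnbr hval hempty
  by_cases hfull : Finset.univ.biUnion (cpdaPrior (CupdateAgent θ i v' r') s o i) = Finset.univ
  · rw [cpdaUtil_of_full _ s o v hi (hprior ▸ hfull), cpdaUtil_of_full _ s o v hi hfull]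
  rw [cpdaUtil_of_not_full _ s o v hi (hprior ▸ hfull), cpdaUtil_of_not_full _ s o v hi hfull,
    hprior, CSWstar_congr hnbr hval hempty]
  obtain ⟨hmem, hmax⟩ :=
    CbestAlloc_spec ⟨_, cpdaPrior_mem_CfeasAllocs_predeq (CupdateAgent θ i v' r') s o i⟩
  have hgain := sub_add_CSW_le_CSWstar_CupdateAgent hi v hr hmem
  rw [show (CupdateAgent θ i v r).val i = v from update_self ..,
    show (CupdateAgent θ i v' r').val i = v' from update_self ..]
  linarith

/-- CPDA is incentive compatible: in the combinatorial setting,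
for every buyer i with true type θ_i = (v, r), every report θ'_i = (v', r')
with r' ⊆ r, every report profile of the others (recorded in θ), and every
order o, u_i^o(θ_i, (θ_i, θ'_{-i})) ≥ u_i^o(θ_i, (θ'_i, θ'_{-i})). -/
theorem cpda_IC {V : Type*} [Fintype V] [DecidableEq V]
    {k : ℕ} (hk : 1 ≤ k) (θ : DA.CProfile V k) (s : V) (hθ : θ.Valid s)
    (i : V) (hi : i ≠ s)
    (v v' : Finset (Fin k) → ℝ) (r r' : Set V) (hr : r' ⊆ r)
    (hv : DA.CValidVal k v) (hv' : DA.CValidVal k v')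
    (o : V ≃ Fin (Fintype.card V)) :
    DA.cpdaUtil v (DA.CupdateAgent θ i v r) s o i
      ≥ DA.cpdaUtil v (DA.CupdateAgent θ i v' r') s o i :=
  cpda_IC_general θ s i hi v v' r r' hr hv hv' o
end
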